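/- arXiv:1104.3636 — 2 statements merged into one kernel-verified Lean document; each statement's English description precedes it below -/
import Mathlib

section
/- Let p > 1, q > 1 with 1/p + 1/q = 1, γ ∈ (0,1), and let λ > ν > 0, U' > 0, ȳ > 0. Define η/q := U'(ȳ)·ȳ^{1/p}, x^{1/p} := γ(η/q)/(λ−ν), y^{1/p} := (1−γ)(η/q)/ν, and suppose the KKT constraint ȳ^{1/q} = γ·x^{1/q} + (1−γ)·y^{1/q} holds with a single route. Then U'(ȳ) = (γ^p(λ−ν)^{1−p} + (1−γ)^p ν^{1−p})^{1/(1−p)}. -/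
theorem single_route_price_aggregation (p q γ lam ν ybar Uprime : ℝ)
    (hp : 1 < p) (hq : 1 < q) (hpq : 1/p + 1/q = 1)
    (hγ0 : 0 < γ) (hγ1 : γ < 1) (hν : 0 < ν) (hlamnu : ν < lam)
    (hybar : 0 < ybar) (hU : 0 < Uprime)
    (η x y : ℝ)
    (hη : η = Uprime * ybar ^ (1/p))
    (hx : x = (γ * η / (lam - ν)) ^ p)
    (hy : y = ((1 - γ) * η / ν) ^ p)
    (hkkt : ybar ^ (1/q) = γ * x ^ (1/q) + (1 - γ) * y ^ (1/q)) :
    Uprime = (γ ^ p * (lam - ν) ^ (1 - p) + (1 - γ) ^ p * ν ^ (1 - p)) ^ (1/(1 - p)) := by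
  have hp0 : (0:ℝ) < p := lt_trans one_pos hp
  have hp1 : p ≠ 0 := ne_of_gt hp0
  have hq0 : (0:ℝ) < q := lt_trans one_pos hq
  have hq1 : q ≠ 0 := ne_of_gt hq0
  have hlam' : (0:ℝ) < lam - ν := sub_pos.mpr hlamnu
  have hγ1' : (0:ℝ) < 1 - γ := sub_pos.mpr hγ1
  have hη0 : 0 < η := by
    rw [hη]; exact mul_pos hU (Real.rpow_pos_of_pos hybar _)
  have hA0 : 0 < γ * η / (lam - ν) := by positivity
  have hB0 : 0 < (1 - γ) * η / ν := by positivity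
  have hqinv : 1/q = 1 - 1/p := by linarith
  have hq' : p * (1/q) = p - 1 := by rw [hqinv]; field_simp
  have hq'' : (1/p) * (p - 1) = 1/q := by rw [hqinv]; field_simp
  -- x^(1/q)
  have hx' : x ^ (1/q) = γ ^ (p-1) * η ^ (p-1) / (lam - ν) ^ (p-1) := by
    rw [hx, ← Real.rpow_mul hA0.le, hq',
      Real.div_rpow (by positivity) hlam'.le,
      Real.mul_rpow hγ0.le hη0.le]
  have hy' : y ^ (1/q) = (1-γ) ^ (p-1) * η ^ (p-1) / ν ^ (p-1) := by
    rw [hy, ← Real.rpow_mul hB0.le, hq',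
      Real.div_rpow (by positivity) hν.le,
      Real.mul_rpow hγ1'.le hη0.le]
  -- η^(p-1)
  have hηp : η ^ (p-1) = Uprime ^ (p-1) * ybar ^ (1/q) := by
    rw [hη, Real.mul_rpow hU.le (by positivity), ← Real.rpow_mul hybar.le, hq'']
  -- γ * γ^(p-1) = γ^p
  have hγp : γ * γ ^ (p-1) = γ ^ p := by
    nth_rewrite 1 [← Real.rpow_one γ]
    rw [← Real.rpow_add hγ0]; ring_nf
  have hγp' : (1-γ) * (1-γ) ^ (p-1) = (1-γ) ^ p := by
    nth_rewrite 1 [← Real.rpow_one (1-γ)]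
    rw [← Real.rpow_add hγ1']; ring_nf
  have hlamexp : (lam - ν) ^ (1-p) = ((lam - ν) ^ (p-1))⁻¹ := by
    rw [show (1-p) = -(p-1) by ring, Real.rpow_neg hlam'.le]
  have hνexp : ν ^ (1-p) = (ν ^ (p-1))⁻¹ := by
    rw [show (1-p) = -(p-1) by ring, Real.rpow_neg hν.le]
  set S := γ ^ p * (lam - ν) ^ (1 - p) + (1 - γ) ^ p * ν ^ (1 - p) with hS
  have hS0 : 0 < S := by positivity
  have hc0 : (0:ℝ) < ybar ^ (1/q) := Real.rpow_pos_of_pos hybar _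
  have hlamp0 : (0:ℝ) < (lam - ν) ^ (p-1) := Real.rpow_pos_of_pos hlam' _
  have hνp0 : (0:ℝ) < ν ^ (p-1) := Real.rpow_pos_of_pos hν _
  have key : S * Uprime ^ (p-1) = 1 := by
    rw [hx', hy', hηp] at hkkt
    field_simp at hkkt
    have e : (S * Uprime ^ (p-1)) * (ybar ^ (1/q) * ((lam-ν)^(p-1) * ν^(p-1)))
        = 1 * (ybar ^ (1/q) * ((lam-ν)^(p-1) * ν^(p-1))) := by
      rw [hS, hlamexp, hνexp, ← hγp, ← hγp']
      field_simp
      linear_combination (-1) * hkkt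
    exact mul_right_cancel₀ (by positivity) e
  have hpm : p - 1 ≠ 0 := by intro h; linarith [h]
  have hUinv : Uprime ^ (p-1) = S⁻¹ := by
    field_simp
    linarith [key]
  have : Uprime = (Uprime ^ (p-1)) ^ (1/(p-1)) := by
    rw [← Real.rpow_mul hU.le, mul_one_div, div_self hpm, Real.rpow_one]
  rw [this, hUinv, ← Real.rpow_neg_one S, ← Real.rpow_mul hS0.le]
  congr 1
  rw [show (1:ℝ)-p = -(p-1) by ring, div_neg]
  ring
end

section
/- Let q > 1 and γ ∈ [0,1]. The function F(x) = (γ·∑_{r∈s} x_r^{1/q} + (1−γ)·(∑_{r∈s} x_r)^{1/q})^q, defined on the nonnegative orthant (with x ≠ 0), is concave. -/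
/-!
The inner function `u x = γ ∑ xᵢ^{1/q} + (1 - γ) (∑ xᵢ)^{1/q}` is concave and positively
homogeneous of degree `1/q`, so `u ^ q` is homogeneous of degree one; on a convex cone such a
function is concave as soon as it is superadditive. Superadditivity of `u ^ q` comes from the level
set `{u = 1}`: with `X = u x ^ q` and `Y = u y ^ q`, `x + y` is `X + Y` times a convex combination
of `X⁻¹ • x` and `Y⁻¹ • y`, both on that level set, and `u ≥ 1` there by concavity.
-/

open Finset

namespace ConvexCone

variable {E : Type*} [AddCommGroup E] [Module ℝ E] (C : ConvexCone ℝ E)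
  {f u : E → ℝ} {q : ℝ}

theorem concaveOn_of_homogeneous_of_superadditive
    (hhom : ∀ c : ℝ, 0 < c → ∀ x ∈ C, f (c • x) = c * f x)
    (hadd : ∀ x ∈ C, ∀ y ∈ C, f x + f y ≤ f (x + y)) : ConcaveOn ℝ C f := by
  refine ⟨C.convex, fun x hx y hy a b ha hb hab => ?_⟩
  rcases ha.eq_or_lt with rfl | ha
  · simp [show b = 1 by linarith]
  rcases hb.eq_or_lt with rfl | hb
  · simp [show a = 1 by linarith]
  calc a • f x + b • f y = f (a • x) + f (b • y) := by
        rw [hhom a ha x hx, hhom b hb y hy, smul_eq_mul, smul_eq_mul]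
    _ ≤ f (a • x + b • y) := hadd _ (C.smul_mem ha hx) _ (C.smul_mem hb hy)

section Homogeneous

variable {C} (hq : 0 < q)
  (hhom : ∀ c : ℝ, 0 < c → ∀ x ∈ C, u (c • x) = c ^ q⁻¹ * u x)
  (hpos : ∀ x ∈ C, 0 < u x)
include hq hhom hpos

theorem rpow_map_smul_of_homogeneous {c : ℝ} (hc : 0 < c) {x : E} (hx : x ∈ C) :
    u (c • x) ^ q = c * u x ^ q := by
  rw [hhom c hc x hx, Real.mul_rpow (by positivity) (hpos x hx).le,
    Real.rpow_inv_rpow hc.le hq.ne']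

theorem map_inv_rpow_smul_eq_one {x : E} (hx : x ∈ C) : u ((u x ^ q)⁻¹ • x) = 1 := by
  have hux := hpos x hx
  rw [hhom _ (by positivity) x hx, Real.inv_rpow (by positivity),
    Real.rpow_rpow_inv hux.le hq.ne', inv_mul_cancel₀ hux.ne']

theorem rpow_superadditive_of_concaveOn (hu : ConcaveOn ℝ C u) {x y : E} (hx : x ∈ C)
    (hy : y ∈ C) : u x ^ q + u y ^ q ≤ u (x + y) ^ q := by
  set X := u x ^ q
  set Y := u y ^ q
  have hX : 0 < X := Real.rpow_pos_of_pos (hpos x hx) q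
  have hY : 0 < Y := Real.rpow_pos_of_pos (hpos y hy) q
  have hS : 0 < X + Y := add_pos hX hY
  have hx' : X⁻¹ • x ∈ C := C.smul_mem (inv_pos.2 hX) hx
  have hy' : Y⁻¹ • y ∈ C := C.smul_mem (inv_pos.2 hY) hy
  have hsplit :
      x + y = (X + Y) • ((X / (X + Y)) • X⁻¹ • x + (Y / (X + Y)) • Y⁻¹ • y) := by
    have hXc : (X + Y) * (X / (X + Y) * X⁻¹) = 1 := by field_simp
    have hYc : (X + Y) * (Y / (X + Y) * Y⁻¹) = 1 := by field_simp
    simp only [smul_add, smul_smul, hXc, hYc, one_smul]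
  have hlevel : 1 ≤ u ((X / (X + Y)) • X⁻¹ • x + (Y / (X + Y)) • Y⁻¹ • y) := by
    have := hu.2 hx' hy' (div_nonneg hX.le hS.le) (div_nonneg hY.le hS.le)
      (by field_simp)
    rwa [map_inv_rpow_smul_eq_one hq hhom hpos hx, map_inv_rpow_smul_eq_one hq hhom hpos hy,
      smul_eq_mul, smul_eq_mul, mul_one, mul_one, ← add_div, div_self hS.ne'] at this
  have hmem : (X / (X + Y)) • X⁻¹ • x + (Y / (X + Y)) • Y⁻¹ • y ∈ C :=
    C.add_mem (C.smul_mem (by positivity) hx') (C.smul_mem (by positivity) hy')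
  calc X + Y ≤ ((X + Y) ^ q⁻¹ * 1) ^ q := by
        rw [mul_one, Real.rpow_inv_rpow hS.le hq.ne']
    _ ≤ u (x + y) ^ q := by
        rw [hsplit, hhom _ hS _ hmem]
        gcongr

theorem concaveOn_rpow_of_homogeneous (hu : ConcaveOn ℝ C u) :
    ConcaveOn ℝ C (fun x => u x ^ q) :=
  C.concaveOn_of_homogeneous_of_superadditive
    (fun _ hc _ hx => rpow_map_smul_of_homogeneous hq hhom hpos hc hx)
    (fun _ hx _ hy => rpow_superadditive_of_concaveOn hq hhom hpos hu hx hy)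

end Homogeneous

end ConvexCone

theorem concaveOn_fun_sum {E ι : Type*} [AddCommMonoid E] [Module ℝ E] {s : Set E}
    {t : Finset ι} {f : ι → E → ℝ} (hs : Convex ℝ s)
    (hf : ∀ i ∈ t, ConcaveOn ℝ s (f i)) :
    ConcaveOn ℝ s (fun x => ∑ i ∈ t, f i x) := by
  refine ⟨hs, fun x hx y hy a b ha hb hab => ?_⟩
  simp only [smul_eq_mul, mul_sum, ← sum_add_distrib]
  exact sum_le_sum fun i hi => (hf i hi).2 hx hy ha hb hab

section MixedPowerSum

variable {ι : Type*} [Fintype ι]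

/-- The function `u` of the generalized multi-path model (objective `u ^ q`), with `p = 1/q`. -/
noncomputable def mixedPowerSum (γ p : ℝ) (x : ι → ℝ) : ℝ :=
  γ * ∑ i, x i ^ p + (1 - γ) * (∑ i, x i) ^ p

variable {γ p : ℝ}

theorem concaveOn_mixedPowerSum (hγ0 : 0 ≤ γ) (hγ1 : γ ≤ 1) (hp0 : 0 ≤ p)
    (hp1 : p ≤ 1) :
    ConcaveOn ℝ (Set.Ici 0) (mixedPowerSum (ι := ι) γ p) := by
  have hcoord : ConcaveOn ℝ (Set.Ici (0 : ι → ℝ)) (fun x => ∑ i, x i ^ p) := by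
    refine concaveOn_fun_sum (convex_Ici 0) fun i _ => ?_
    have h := (Real.concaveOn_rpow hp0 hp1).comp_linearMap
      (LinearMap.proj (R := ℝ) (φ := fun _ : ι => ℝ) i)
    exact h.subset (fun _ hx => hx i) (convex_Ici 0)
  have htotal : ConcaveOn ℝ (Set.Ici 0) (fun x : ι → ℝ => (∑ i, x i) ^ p) :=
    ((Real.concaveOn_rpow hp0 hp1).comp_linearMap (∑ i, LinearMap.proj i)).subset
      (fun x hx => by simpa using sum_nonneg fun i _ => hx i) (convex_Ici 0)
      |>.congr fun x _ => by simp
  exact (hcoord.smul hγ0).add (htotal.smul (sub_nonneg.2 hγ1))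

theorem mixedPowerSum_smul {c : ℝ} (hc : 0 ≤ c) {x : ι → ℝ} (hx : 0 ≤ x) :
    mixedPowerSum γ p (c • x) = c ^ p * mixedPowerSum γ p x := by
  simp only [mixedPowerSum, Pi.smul_apply, smul_eq_mul, ← mul_sum]
  rw [Real.mul_rpow hc (sum_nonneg fun i _ => hx i)]
  simp only [Real.mul_rpow hc (hx _), ← mul_sum]
  ring

theorem mixedPowerSum_pos (hγ0 : 0 ≤ γ) (hγ1 : γ ≤ 1) {x : ι → ℝ} (hx : 0 < x) :
    0 < mixedPowerSum γ p x := by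
  obtain ⟨hx0, j, hj⟩ := Pi.lt_def.1 hx
  have hcoord : 0 < ∑ i, x i ^ p :=
    sum_pos' (fun i _ => Real.rpow_nonneg (hx0 i) p)
      ⟨j, mem_univ j, Real.rpow_pos_of_pos hj p⟩
  have htotal : 0 < (∑ i, x i) ^ p :=
    Real.rpow_pos_of_pos (sum_pos' (fun i _ => hx0 i) ⟨j, mem_univ j, hj⟩) p
  exact convex_Ioi (0 : ℝ) hcoord htotal hγ0 (sub_nonneg.2 hγ1) (add_sub_cancel γ 1)

end MixedPowerSum

theorem generalized_objective_concave {ι : Type*} [Fintype ι]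
    (q γ : ℝ) (hq : 1 < q) (hγ0 : 0 ≤ γ) (hγ1 : γ ≤ 1) :
    ConcaveOn ℝ {x : ι → ℝ | (∀ i, 0 ≤ x i) ∧ x ≠ 0}
      (fun x => (γ * ∑ i, (x i) ^ (1/q) + (1 - γ) * (∑ i, x i) ^ (1/q)) ^ q) := by
  have hq0 : 0 < q := one_pos.trans hq
  set C := ConvexCone.strictlyPositive ℝ (ι → ℝ)
  have hdomain : {x : ι → ℝ | (∀ i, 0 ≤ x i) ∧ x ≠ 0} = C := by
    ext x
    simp [C, lt_iff_le_and_ne, Pi.le_def, eq_comm]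
  have hu : ConcaveOn ℝ C (mixedPowerSum γ q⁻¹) :=
    (concaveOn_mixedPowerSum (ι := ι) hγ0 hγ1 (inv_nonneg.2 hq0.le)
      (inv_le_one_of_one_le₀ hq.le)).subset ConvexCone.strictlyPositive_le_positive C.convex
  rw [hdomain, one_div]
  exact C.concaveOn_rpow_of_homogeneous hq0
    (fun _ hc _ hx => mixedPowerSum_smul hc.le (le_of_lt hx))
    (fun _ hx => mixedPowerSum_pos hγ0 hγ1 hx) hu
end
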